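/- arXiv:1308.5080 — 4 statements merged into one kernel-verified Lean document; each statement's English description precedes it below -/
import Mathlib

section
/- Let U be a finite-dimensional complex vector space, b : U → U* an ε-hermitian endomorphism, h : U → U an automorphism preserving b, and V : U* → U an endomorphism satisfying V∘b = h − I and V̄* = −ε V∘h̄*. If V is an isomorphism, then h = −ε V (V̄*)⁻¹ and b = −V⁻¹ − ε (V̄*)⁻¹. -/
open Matrix

namespace Matrix

variable {n R : Type*} [Fintype n] [DecidableEq n] [CommRing R] [StarRing R]

theorem eq_smul_mul_conjTranspose_inv_of_conjTranspose_eq {s : R} (hs : s * star s = 1)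
    {h V : Matrix n n R} (hV : IsUnit V.det) (hVh : Vᴴ = s • (V * hᴴ)) :
    h = s • (V * (Vᴴ)⁻¹) := by
  have hVc : IsUnit Vᴴ.det := by rwa [det_conjTranspose, isUnit_star]
  have hV_eq : V = star s • (h * Vᴴ) := by
    simpa only [conjTranspose_smul, conjTranspose_mul, conjTranspose_conjTranspose] using
      congrArg conjTranspose hVh
  have h_mul : h * Vᴴ = s • V := by
    conv_rhs => rw [hV_eq, smul_smul, hs, one_smul]
  rw [← smul_mul_assoc, ← h_mul, Matrix.mul_assoc, mul_nonsing_inv _ hVc, Matrix.mul_one]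

theorem eq_smul_conjTranspose_inv_sub_inv {s : R} {b h V : Matrix n n R} (hV : IsUnit V.det)
    (hh : h = s • (V * (Vᴴ)⁻¹)) (hVb : V * b = h - 1) :
    b = s • (Vᴴ)⁻¹ - V⁻¹ := by
  calc b = V⁻¹ * (V * b) := by rw [← Matrix.mul_assoc, nonsing_inv_mul _ hV, Matrix.one_mul]
    _ = s • (Vᴴ)⁻¹ - V⁻¹ := by
      rw [hVb, hh, Matrix.mul_sub, Matrix.mul_smul, ← Matrix.mul_assoc, nonsing_inv_mul _ hV,
        Matrix.one_mul, Matrix.mul_one]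

end Matrix

theorem simple_HVS_determined_by_V_general {n : ℕ} (ε : ℂ) (hε : ε = 1 ∨ ε = -1)
    (b h V : Matrix (Fin n) (Fin n) ℂ)
    (hPL1 : V * b = h - 1)
    (hPL2 : Vᴴ = -ε • (V * hᴴ))
    (hV : IsUnit V.det) :
    h = (-ε) • (V * (Vᴴ)⁻¹) ∧ b = -V⁻¹ - ε • (Vᴴ)⁻¹ := by
  have hunit : -ε * star (-ε) = 1 := by rcases hε with rfl | rfl <;> norm_num
  have hh := eq_smul_mul_conjTranspose_inv_of_conjTranspose_eq hunit hV hPL2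
  refine ⟨hh, ?_⟩
  rw [eq_smul_conjTranspose_inv_sub_inv hV hh hPL1]
  module

/-- For an ε-hermitian variation structure (in matrix form over ℂ):
if `V` is invertible, then `h = -ε V (V̄*)⁻¹` and `b = -V⁻¹ - ε (V̄*)⁻¹`. -/
theorem simple_HVS_determined_by_V {n : ℕ} (ε : ℂ) (hε : ε = 1 ∨ ε = -1)
    (b h V : Matrix (Fin n) (Fin n) ℂ)
    (hherm : bᴴ = ε • b)
    (hauto : IsUnit h.det)
    (hpres : hᴴ * b * h = b)
    (hPL1 : V * b = h - 1)
    (hPL2 : Vᴴ = -ε • (V * hᴴ))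
    (hV : IsUnit V.det) :
    h = (-ε) • (V * (Vᴴ)⁻¹) ∧ b = -V⁻¹ - ε • (Vᴴ)⁻¹ :=
  simple_HVS_determined_by_V_general ε hε b h V hPL1 hPL2 hV
end

section
/- Let (U; b, h, V) be an ε-hermitian variation structure. Suppose U = U₁ ⊕ U₂ and that b and h decompose as block direct sums b = b₁ ⊕ b₂ and h = h₁ ⊕ h₂ with respect to this decomposition, with b₁ nondegenerate. Then V also decomposes as V = V₁ ⊕ V₂, i.e. the variation structure splits as a direct sum of two variation structures. -/
/-!
The lower-left block of `V * b = h - 1` reads `V₂₁ * b₁₁ = 0`, so `V₂₁ = 0` because `b₁₁` is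
invertible. The lower-left block of `Vᴴ = -ε • (V * hᴴ)` then reads
`V₁₂ᴴ = -ε • (V₂₁ * h₁₁ᴴ + V₂₂ * h₁₂ᴴ) = 0`.
-/

open Matrix

namespace Matrix

variable {l m n o p q α : Type*}

theorem toBlocks₂₁_mul [Fintype l] [Fintype m] [NonUnitalNonAssocSemiring α]
    (M : Matrix (n ⊕ o) (l ⊕ m) α) (N : Matrix (l ⊕ m) (p ⊕ q) α) :
    (M * N).toBlocks₂₁ = M.toBlocks₂₁ * N.toBlocks₁₁ + M.toBlocks₂₂ * N.toBlocks₂₁ := by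
  ext i j
  simp [mul_apply, Fintype.sum_sum_type, toBlocks₂₁, toBlocks₁₁, toBlocks₂₂]

theorem toBlocks₂₁_conjTranspose [Star α] (M : Matrix (n ⊕ o) (l ⊕ m) α) :
    Mᴴ.toBlocks₂₁ = M.toBlocks₁₂ᴴ :=
  rfl

theorem toBlocks₂₁_sub [Sub α] (M N : Matrix (n ⊕ o) (l ⊕ m) α) :
    (M - N).toBlocks₂₁ = M.toBlocks₂₁ - N.toBlocks₂₁ :=
  rfl

theorem toBlocks₂₁_smul {R : Type*} [SMul R α] (c : R) (M : Matrix (n ⊕ o) (l ⊕ m) α) :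
    (c • M).toBlocks₂₁ = c • M.toBlocks₂₁ :=
  rfl

theorem toBlocks₂₁_one [DecidableEq l] [DecidableEq m] [Zero α] [One α] :
    (1 : Matrix (l ⊕ m) (l ⊕ m) α).toBlocks₂₁ = 0 :=
  rfl

theorem toBlocks₂₁_eq_zero_of_mul_eq_sub_one [Fintype l] [Fintype m] [DecidableEq l]
    [DecidableEq m] [CommRing α] {V b h : Matrix (l ⊕ m) (l ⊕ m) α} (hVb : V * b = h - 1)
    (hb : b.toBlocks₂₁ = 0) (hh : h.toBlocks₂₁ = 0) (hb₁₁ : IsUnit b.toBlocks₁₁.det) :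
    V.toBlocks₂₁ = 0 := by
  have hV₂₁b₁₁ : V.toBlocks₂₁ * b.toBlocks₁₁ = 0 := by
    simpa [toBlocks₂₁_mul, toBlocks₂₁_sub, toBlocks₂₁_one, hb, hh] using congrArg toBlocks₂₁ hVb
  rw [← mul_nonsing_inv_cancel_right _ V.toBlocks₂₁ hb₁₁, hV₂₁b₁₁, Matrix.zero_mul]

theorem toBlocks₁₂_eq_zero_of_conjTranspose_eq_smul_mul [Fintype l] [Fintype m]
    [NonUnitalNonAssocSemiring α] [StarRing α] {R : Type*} [Monoid R] [DistribMulAction R α]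
    {V h : Matrix (l ⊕ m) (l ⊕ m) α} {c : R}
    (hV : Vᴴ = c • (V * hᴴ)) (hh : h.toBlocks₁₂ = 0) (hV₂₁ : V.toBlocks₂₁ = 0) :
    V.toBlocks₁₂ = 0 := by
  have hV₁₂ : V.toBlocks₁₂ᴴ = 0 := by
    simpa [toBlocks₂₁_smul, toBlocks₂₁_mul, toBlocks₂₁_conjTranspose, hh, hV₂₁] using
      congrArg toBlocks₂₁ hV
  exact conjTranspose_eq_zero.mp hV₁₂

end Matrix

theorem HVS_splitting_general {m n : ℕ} (ε : ℂ)
    (b h V : Matrix (Fin m ⊕ Fin n) (Fin m ⊕ Fin n) ℂ)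
    (hPL1 : V * b = h - 1)
    (hPL2 : Vᴴ = -ε • (V * hᴴ))
    (hb21 : b.toBlocks₂₁ = 0)
    (hh12 : h.toBlocks₁₂ = 0) (hh21 : h.toBlocks₂₁ = 0)
    (hb1 : IsUnit (b.toBlocks₁₁).det) :
    V.toBlocks₁₂ = 0 ∧ V.toBlocks₂₁ = 0 := by
  have hV21 := toBlocks₂₁_eq_zero_of_mul_eq_sub_one hPL1 hb21 hh21 hb1
  exact ⟨toBlocks₁₂_eq_zero_of_conjTranspose_eq_smul_mul hPL2 hh12 hV21, hV21⟩

/-- Splitting Lemma: if `b` and `h` of an ε-hermitian variation structure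
are block diagonal with respect to `U = U₁ ⊕ U₂` and `b₁` is nondegenerate, then `V`
is block diagonal too, i.e. the variation structure splits. -/
theorem HVS_splitting {m n : ℕ} (ε : ℂ) (hε : ε = 1 ∨ ε = -1)
    (b h V : Matrix (Fin m ⊕ Fin n) (Fin m ⊕ Fin n) ℂ)
    (hherm : bᴴ = ε • b)
    (hauto : IsUnit h.det)
    (hpres : hᴴ * b * h = b)
    (hPL1 : V * b = h - 1)
    (hPL2 : Vᴴ = -ε • (V * hᴴ))
    (hb12 : b.toBlocks₁₂ = 0) (hb21 : b.toBlocks₂₁ = 0)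
    (hh12 : h.toBlocks₁₂ = 0) (hh21 : h.toBlocks₂₁ = 0)
    (hb1 : IsUnit (b.toBlocks₁₁).det) :
    V.toBlocks₁₂ = 0 ∧ V.toBlocks₂₁ = 0 :=
  HVS_splitting_general ε b h V hPL1 hPL2 hb21 hh12 hh21 hb1
end

section
/- Let U be a finite-dimensional complex vector space, S : U × U → ℂ a sesquilinear form, and h an automorphism of U such that S(α, β) = S(hβ, α)̄ (or in the bilinear real case S(α,β) = S(hβ,α)). Then for z ∈ S¹ \ {1}, the form (1−z)S + (1−z̄)Sᵗ equals (1−z̄)·S∘(h⁻¹ − z·I) composed appropriately; consequently if 1/z̄ (equivalently z) is not an eigenvalue of h and S is nondegenerate, then (1−z)S + (1−z̄)Sᵗ is nondegenerate. -/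
/-!
The monodromy relation `S = Sᵀ h` gives `Sᵀ = S h⁻¹ = hᵀ S`, so `Sᵀ - z S` factors both as
`S (h⁻¹ - z)` and as `(h - z)ᵀ S`. On the unit circle `(1 - z̄) z = -(1 - z)`, which turns
`(1 - z) S + (1 - z̄) Sᵀ` into `(1 - z̄) (Sᵀ - z S)`; taking determinants of the second
factorization gives nondegeneracy.
-/

open Matrix

section

variable {ι R : Type*} [Fintype ι] [DecidableEq ι] [CommRing R]

theorem transpose_eq_mul_inv_of_eq_transpose_mul {S h : Matrix ι ι R}
    (hh : IsUnit h.det) (hrel : S = Sᵀ * h) : Sᵀ = S * h⁻¹ := by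
  rw [hrel, mul_nonsing_inv_cancel_right _ _ hh, ← hrel]

theorem mul_sub_smul_one_eq_of_transpose_eq_mul {S g : Matrix ι ι R}
    (hS : Sᵀ = S * g) (z : R) : S * (g - z • 1) = Sᵀ - z • S := by
  rw [Matrix.mul_sub, ← hS, Matrix.mul_smul, Matrix.mul_one]

theorem smul_add_smul_transpose_eq_of_transpose_eq_mul {S g : Matrix ι ι R}
    (hS : Sᵀ = S * g) {z w : R} (hzw : z * w = 1) :
    (1 - z) • S + (1 - w) • Sᵀ = (1 - w) • (S * (g - z • 1)) := by
  rw [mul_sub_smul_one_eq_of_transpose_eq_mul hS, smul_sub, smul_smul,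
    show (1 - w) * z = -(1 - z) by linear_combination -hzw, neg_smul, sub_neg_eq_add, add_comm]

theorem transpose_sub_smul_one_mul_of_eq_transpose_mul {S h : Matrix ι ι R}
    (hrel : S = Sᵀ * h) (z : R) : (h - z • 1)ᵀ * S = Sᵀ - z • S := by
  have hST : Sᵀ = hᵀ * S := by simpa using congrArg transpose hrel
  rw [transpose_sub, transpose_smul, transpose_one, Matrix.sub_mul, Matrix.smul_mul,
    Matrix.one_mul, hST]

end

/-- if a nondegenerate pairing `S` satisfies the monodromy relation
`S(α,β) = S(hβ,α)` (in matrix form `S = Sᵀ·h`), then for `z ∈ S¹∖{1}` one has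
`(1−z)S + (1−z̄)Sᵀ = (1−z̄)·S·(h⁻¹ − z·I)`; consequently if `z` is not an eigenvalue of
`h` and `S` is nondegenerate then `(1−z)S + (1−z̄)Sᵀ` is nondegenerate. -/
theorem seifert_signature_jumps {n : ℕ}
    (S h : Matrix (Fin n) (Fin n) ℂ)
    (hh : IsUnit h.det) (hrel : S = Sᵀ * h)
    (z : ℂ) (hz : z * star z = 1) (hz1 : z ≠ 1) :
    (1 - z) • S + (1 - star z) • Sᵀ = (1 - star z) • (S * (h⁻¹ - z • (1 : Matrix (Fin n) (Fin n) ℂ))) ∧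
    (IsUnit S.det → (h - z • (1 : Matrix (Fin n) (Fin n) ℂ)).det ≠ 0 →
      IsUnit ((1 - z) • S + (1 - star z) • Sᵀ).det) := by
  have hST := transpose_eq_mul_inv_of_eq_transpose_mul hh hrel
  have hform := smul_add_smul_transpose_eq_of_transpose_eq_mul hST hz
  refine ⟨hform, fun hS hdet => ?_⟩
  have hfactor : S * (h⁻¹ - z • 1) = (h - z • 1)ᵀ * S := by
    rw [mul_sub_smul_one_eq_of_transpose_eq_mul hST,
      transpose_sub_smul_one_mul_of_eq_transpose_mul hrel]
  have hw : 1 - star z ≠ 0 := 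
    sub_ne_zero.mpr fun hw1 => hz1 (star_injective (by rw [← hw1, star_one]))
  rw [hform, hfactor, det_smul, det_mul, det_transpose]
  exact isUnit_iff_ne_zero.mpr (mul_ne_zero (pow_ne_zero _ hw) (mul_ne_zero hdet hS.ne_zero))
end

section
/- Let S be a real n×n matrix, N ⊆ ℝⁿ a subspace of dimension d with S(x,y) = 0 for all x,y ∈ N (as a bilinear form). Then for every z ∈ S¹∖{1}, the hermitian form H(z) = (1−z)S + (1−z̄)Sᵗ vanishes on the complexification of N, and hence |signature(H(z))| ≤ n − 2d + dim ker H(z). -/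
/-!
For real `u, w ∈ N` the form `H(z)` takes the value `(1 - z) S(u, w) + (1 - z̄) S(w, u) = 0`, so by
sesquilinearity it vanishes on the complex span `W` of `N`, and `dim W ≥ d` because a real basis
of `N` stays linearly independent over `ℂ`. On the span of the eigenvectors of `H(z)` with positive
(resp. negative) eigenvalues the form is definite, so that span meets `W` only in `0`; hence
`p + dim W ≤ n` and `q + dim W ≤ n` for the numbers `p`, `q` of positive and negative eigenvalues.
With `p + q + dim ker H(z) = n` this gives `|p - q| ≤ n - 2 dim W + dim ker H(z)`.
-/

open Matrix

/-- The signature of a hermitian matrix: number of positive eigenvalues minus number of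
negative eigenvalues. -/
noncomputable def hermSig {m : Type*} [Fintype m] [DecidableEq m]
    (A : Matrix m m ℂ) (hA : A.IsHermitian) : ℤ :=
  ((Finset.univ.filter fun i => 0 < hA.eigenvalues i).card : ℤ) -
  ((Finset.univ.filter fun i => hA.eigenvalues i < 0).card : ℤ)

open Module Submodule ComplexConjugate

namespace Matrix

variable {𝕜 m : Type*} [RCLike 𝕜] [Fintype m]

theorem star_dotProduct_mulVec_eq_zero_of_mem_span {R : Type*} [CommSemiring R] [StarRing R]
    {A : Matrix m m R} {s : Set (m → R)} (hs : ∀ x ∈ s, ∀ y ∈ s, star x ⬝ᵥ A *ᵥ y = 0)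
    {x y : m → R} (hx : x ∈ span R s) (hy : y ∈ span R s) : star x ⬝ᵥ A *ᵥ y = 0 := by
  induction hx, hy using Submodule.span_induction₂ with
  | mem_mem x y hx hy => exact hs x hx y hy
  | zero_left => simp
  | zero_right => simp
  | add_left x y w _ _ _ hx hy => rw [star_add, add_dotProduct, hx, hy, add_zero]
  | add_right x y w _ _ _ hx hy => rw [mulVec_add, dotProduct_add, hx, hy, add_zero]
  | smul_left r x y _ _ h => rw [star_smul, smul_dotProduct, h, smul_zero]
  | smul_right r x y _ _ h => rw [mulVec_smul, dotProduct_smul, h, smul_zero]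

theorem star_dotProduct_mulVec_sum_smul_of_orthonormal {ι : Type*} [Fintype ι]
    {A : Matrix m m 𝕜} {u : ι → EuclideanSpace 𝕜 m} (hu : Orthonormal 𝕜 u) {μ : ι → 𝕜}
    (hAu : ∀ i, A *ᵥ u i = μ i • u i) (c : ι → 𝕜) :
    star (∑ i, c i • ⇑(u i)) ⬝ᵥ A *ᵥ ∑ i, c i • ⇑(u i) = ∑ i, conj (c i) * (c i * μ i) := by
  have hmul : A *ᵥ ∑ i, c i • ⇑(u i) = ∑ i, (c i * μ i) • ⇑(u i) := by
    simp [mulVec_sum, mulVec_smul, hAu, smul_smul]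
  rw [hmul, dotProduct_comm, ← hu.inner_sum, EuclideanSpace.inner_eq_star_dotProduct]
  simp [WithLp.ofLp_sum]

namespace IsHermitian

variable [DecidableEq m] {A : Matrix m m 𝕜} (hA : A.IsHermitian)

theorem eq_zero_of_mem_span_eigenvectorBasis {s : Finset m} {ε : ℝ}
    (hs : ∀ i ∈ s, 0 < ε * hA.eigenvalues i) {x : m → 𝕜}
    (hx : x ∈ span 𝕜 (Set.range fun i : s => ⇑(hA.eigenvectorBasis i)))
    (hx0 : star x ⬝ᵥ A *ᵥ x = 0) : x = 0 := by
  obtain ⟨c, rfl⟩ := (mem_span_range_iff_exists_fun 𝕜).mp hx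
  rw [star_dotProduct_mulVec_sum_smul_of_orthonormal (u := fun i : s => hA.eigenvectorBasis i)
    (hA.eigenvectorBasis.orthonormal.comp _ Subtype.val_injective)
    (μ := fun i => (hA.eigenvalues i : 𝕜))
    (fun i => (hA.mulVec_eigenvectorBasis i).trans (RCLike.real_smul_eq_coe_smul _ _))] at hx0
  have hsum : ∑ i : s, ε * hA.eigenvalues i * ‖c i‖ ^ 2 = 0 := by
    simp_rw [← mul_assoc, RCLike.conj_mul] at hx0
    have hreal : ∑ i : s, ‖c i‖ ^ 2 * hA.eigenvalues i = 0 := by exact_mod_cast hx0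
    rw [← mul_zero ε, ← hreal, Finset.mul_sum]
    exact Finset.sum_congr rfl fun i _ => by ring
  have hc : ∀ i, c i = 0 := fun i => by
    have := (Finset.sum_eq_zero_iff_of_nonneg fun (j : s) _ =>
      mul_nonneg (hs j j.2).le (sq_nonneg ‖c j‖)).mp hsum i (Finset.mem_univ i)
    simpa [(hs i i.2).ne'] using this
  simp [hc]

theorem card_add_finrank_le {s : Finset m} {ε : ℝ} (hs : ∀ i ∈ s, 0 < ε * hA.eigenvalues i)
    {W : Submodule 𝕜 (m → 𝕜)} (hW : ∀ x ∈ W, star x ⬝ᵥ A *ᵥ x = 0) :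
    s.card + finrank 𝕜 W ≤ Fintype.card m := by
  have hindep : LinearIndependent 𝕜 fun i : s => ⇑(hA.eigenvectorBasis i) :=
    ((hA.eigenvectorBasis.toBasis.map (WithLp.linearEquiv 2 𝕜 (m → 𝕜))).linearIndependent.comp
      _ Subtype.val_injective)
  have hdisj : Disjoint (span 𝕜 (Set.range fun i : s => ⇑(hA.eigenvectorBasis i))) W :=
    disjoint_def.mpr fun x hx hxW => hA.eq_zero_of_mem_span_eigenvectorBasis hs hx (hW x hxW)
  calc s.card + finrank 𝕜 W
      = finrank 𝕜 (span 𝕜 (Set.range fun i : s => ⇑(hA.eigenvectorBasis i))) + finrank 𝕜 W := by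
        rw [finrank_span_eq_card hindep, Fintype.card_coe]
    _ ≤ finrank 𝕜 (m → 𝕜) := finrank_add_finrank_le_of_disjoint hdisj
    _ = Fintype.card m := finrank_fintype_fun_eq_card 𝕜

theorem card_pos_add_card_neg_add_finrank_ker :
    (Finset.univ.filter fun i => 0 < hA.eigenvalues i).card +
      (Finset.univ.filter fun i => hA.eigenvalues i < 0).card +
      finrank 𝕜 (LinearMap.ker A.mulVecLin) = Fintype.card m := by
  have hsplit : (Finset.univ.filter fun i => hA.eigenvalues i ≠ 0) =
      (Finset.univ.filter fun i => 0 < hA.eigenvalues i) ∪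
        (Finset.univ.filter fun i => hA.eigenvalues i < 0) := by
    rw [← Finset.filter_or]
    exact Finset.filter_congr fun i _ => by rw [ne_comm, ne_iff_lt_or_gt]
  have hdisj : Disjoint (Finset.univ.filter fun i => 0 < hA.eigenvalues i)
      (Finset.univ.filter fun i => hA.eigenvalues i < 0) :=
    Finset.disjoint_filter.mpr fun _ _ hpos hneg => lt_asymm hpos hneg
  rw [← Finset.card_union_of_disjoint hdisj, ← hsplit, ← Fintype.card_subtype,
    ← hA.rank_eq_card_non_zero_eigs, rank, LinearMap.finrank_range_add_finrank_ker,
    finrank_fintype_fun_eq_card]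

end IsHermitian

theorem IsHermitian.abs_hermSig_le [DecidableEq m] {A : Matrix m m ℂ} (hA : A.IsHermitian)
    {W : Submodule ℂ (m → ℂ)} (hW : ∀ x ∈ W, star x ⬝ᵥ A *ᵥ x = 0) :
    |hermSig A hA| ≤
      Fintype.card m - 2 * finrank ℂ W + finrank ℂ (LinearMap.ker A.mulVecLin) := by
  have hpos := hA.card_add_finrank_le (ε := 1)
    (s := Finset.univ.filter fun i => 0 < hA.eigenvalues i) (by simp) hW
  have hneg := hA.card_add_finrank_le (ε := -1)
    (s := Finset.univ.filter fun i => hA.eigenvalues i < 0) (by simp) hW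
  have hcard := hA.card_pos_add_card_neg_add_finrank_ker
  rw [hermSig, abs_le]
  constructor <;> omega

end Matrix

theorem finrank_le_finrank_span_ofReal_image {m : Type*} [Fintype m] (N : Submodule ℝ (m → ℝ)) :
    finrank ℝ N ≤ finrank ℂ (span ℂ ((fun (v : m → ℝ) => fun i => (v i : ℂ)) '' N)) := by
  let b := finBasis ℝ N
  have hindep : LinearIndependent ℂ fun k => algebraMap ℝ ℂ ∘ (b k : m → ℝ) :=
    linearIndependent_algebraMap_comp_iff.mpr (b.linearIndependent.map' N.subtype N.ker_subtype)
  calc finrank ℝ N = finrank ℂ (span ℂ (Set.range fun k => algebraMap ℝ ℂ ∘ (b k : m → ℝ))) := by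
        rw [finrank_span_eq_card hindep, Fintype.card_fin]
    _ ≤ _ := finrank_mono <| span_mono <| Set.range_subset_iff.mpr fun k =>
        Set.mem_image_of_mem (fun (v : m → ℝ) i => (v i : ℂ)) (b k).2

theorem Matrix.star_ofReal_dotProduct_mulVec_ofReal {m : Type*} [Fintype m] (S : Matrix m m ℝ)
    (z : ℂ) (u w : m → ℝ) :
    star (fun i => (u i : ℂ)) ⬝ᵥ ((1 - z) • S.map Complex.ofReal +
      (1 - star z) • (S.map Complex.ofReal)ᵀ) *ᵥ (fun i => (w i : ℂ)) =
      (1 - z) * (u ⬝ᵥ S *ᵥ w : ℝ) + (1 - star z) * (w ⬝ᵥ S *ᵥ u : ℝ) := by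
  have hmap : ∀ (T : Matrix m m ℝ) (x y : m → ℝ),
      (fun i => (x i : ℂ)) ⬝ᵥ T.map Complex.ofReal *ᵥ (fun i => (y i : ℂ)) = (x ⬝ᵥ T *ᵥ y : ℝ) :=
    fun T x y => by simp [dotProduct, mulVec, Finset.mul_sum]
  have hstar : star (fun i => (u i : ℂ)) = fun i => (u i : ℂ) := by
    funext i; simp
  rw [hstar, add_mulVec, smul_mulVec, smul_mulVec, dotProduct_add, dotProduct_smul,
    dotProduct_smul, ← transpose_map, hmap, hmap, dotProduct_transpose_mulVec]
  rfl

theorem murasugi_inequality_core_general {n : ℕ}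
    (S : Matrix (Fin n) (Fin n) ℝ)
    (N : Submodule ℝ (Fin n → ℝ)) (d : ℕ) (hd : Module.finrank ℝ N = d)
    (hvan : ∀ x ∈ N, ∀ y ∈ N, x ⬝ᵥ S.mulVec y = 0)
    (z : ℂ)
    (H : Matrix (Fin n) (Fin n) ℂ)
    (hH : H = (1 - z) • (S.map Complex.ofReal) + (1 - star z) • (S.map Complex.ofReal)ᵀ)
    (hHerm : H.IsHermitian) :
    (∀ x ∈ Submodule.span ℂ ((fun (v : Fin n → ℝ) => fun i => (v i : ℂ)) '' N),
      ∀ y ∈ Submodule.span ℂ ((fun (v : Fin n → ℝ) => fun i => (v i : ℂ)) '' N),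
        star x ⬝ᵥ H.mulVec y = 0) ∧
    |hermSig H hHerm| ≤ (n : ℤ) - 2 * d + Module.finrank ℂ (LinearMap.ker H.mulVecLin) := by
  have hisotropic : ∀ x ∈ span ℂ ((fun (v : Fin n → ℝ) => fun i => (v i : ℂ)) '' N),
      ∀ y ∈ span ℂ ((fun (v : Fin n → ℝ) => fun i => (v i : ℂ)) '' N),
        star x ⬝ᵥ H *ᵥ y = 0 := by
    refine fun x hx y hy => star_dotProduct_mulVec_eq_zero_of_mem_span ?_ hx hy
    rintro _ ⟨u, hu, rfl⟩ _ ⟨w, hw, rfl⟩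
    rw [hH, star_ofReal_dotProduct_mulVec_ofReal, hvan u hu w hw, hvan w hw u hu]
    simp
  refine ⟨hisotropic, ?_⟩
  have hsig := hHerm.abs_hermSig_le fun x hx => hisotropic x hx x hx
  have hdim := hd ▸ finrank_le_finrank_span_ofReal_image N
  rw [Fintype.card_fin] at hsig
  omega

/-- if the real bilinear form `S` vanishes on a `d`-dimensional subspace
`N ⊆ ℝⁿ`, then for every `z ∈ S¹∖{1}` the hermitian form
`H(z) = (1−z)S + (1−z̄)Sᵗ` vanishes on the complexification of `N`, and
`|signature H(z)| ≤ n − 2d + dim ker H(z)`. -/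
theorem murasugi_inequality_core {n : ℕ}
    (S : Matrix (Fin n) (Fin n) ℝ)
    (N : Submodule ℝ (Fin n → ℝ)) (d : ℕ) (hd : Module.finrank ℝ N = d)
    (hvan : ∀ x ∈ N, ∀ y ∈ N, x ⬝ᵥ S.mulVec y = 0)
    (z : ℂ) (hz : z * star z = 1) (hz1 : z ≠ 1)
    (H : Matrix (Fin n) (Fin n) ℂ)
    (hH : H = (1 - z) • (S.map Complex.ofReal) + (1 - star z) • (S.map Complex.ofReal)ᵀ)
    (hHerm : H.IsHermitian) :
    (∀ x ∈ Submodule.span ℂ ((fun (v : Fin n → ℝ) => fun i => (v i : ℂ)) '' N),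
      ∀ y ∈ Submodule.span ℂ ((fun (v : Fin n → ℝ) => fun i => (v i : ℂ)) '' N),
        star x ⬝ᵥ H.mulVec y = 0) ∧
    |hermSig H hHerm| ≤ (n : ℤ) - 2 * d + Module.finrank ℂ (LinearMap.ker H.mulVecLin) :=
  murasugi_inequality_core_general S N d hd hvan z H hH hHerm
end
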